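/- arXiv:2602.15414 — 3 statements merged into one kernel-verified Lean document; each statement's English description precedes it below -/
import Mathlib

section
/- Let g, ω̂ : D → ℂ' be smooth functions on an open set D ⊂ ℝ² (with paracomplex coordinate z = x + jy, ∂_z = (∂_x + j∂_y)/2, ∂_z̄ = (∂_x − j∂_y)/2) satisfying the equations ω̂_z̄ = −2j|ω̂|²(1+|g|²)ḡ and g_z̄ = j(1+|g|²)²·conj(ω̂). Then g satisfies the Lorentzian harmonic map equation g_{zz̄} − (2ḡ/(1+|g|²))·g_z·g_z̄ = 0, wherever 1 + |g|² is invertible. -/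
noncomputable section

/-- Paracomplex numbers `z = x + jy` with `j² = 1`, represented as pairs `(x, y)`. -/
abbrev PC := ℝ × ℝ

/-- Paracomplex multiplication: `(x + jy)(u + jv) = (xu + yv) + j(xv + yu)`. -/
def pmul (z w : PC) : PC := (z.1 * w.1 + z.2 * w.2, z.1 * w.2 + z.2 * w.1)

/-- Paracomplex conjugation `z̄ = x − jy`. -/
def pconj (z : PC) : PC := (z.1, -z.2)

/-- Squared modulus `|z|² = z·z̄ = x² − y²`. -/
def pnormSq (z : PC) : ℝ := z.1 ^ 2 - z.2 ^ 2

/-- The paracomplex unit `j`. -/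
def pj : PC := (0, 1)

/-- The paracomplex unit `1`. -/
def pone : PC := (1, 0)

/-- Partial derivative in the `x` direction. -/
def dX (f : PC → PC) (p : PC) : PC := fderiv ℝ f p (1, 0)

/-- Partial derivative in the `y` direction. -/
def dY (f : PC → PC) (p : PC) : PC := fderiv ℝ f p (0, 1)

/-- Para-Wirtinger derivative `f_z = (f_x + j f_y)/2`. -/
def Dz (f : PC → PC) (p : PC) : PC := (1/2 : ℝ) • (dX f p + pmul pj (dY f p))

/-- Para-Wirtinger derivative `f_z̄ = (f_x − j f_y)/2`. -/
def Dzbar (f : PC → PC) (p : PC) : PC := (1/2 : ℝ) • (dX f p - pmul pj (dY f p))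

/-! ### Auxiliary lemmas -/

lemma fderiv_apply_vec (a : PC → ℝ) (ha : ContDiff ℝ (⊤ : ℕ∞) a) (p w v : PC) :
    fderiv ℝ (fun q => fderiv ℝ a q w) p v = (fderiv ℝ (fderiv ℝ a) p v) w := by
  have hc : DifferentiableAt ℝ (fderiv ℝ a) p :=
    ((ha.fderiv_right (m := 1) (by norm_cast)).differentiable one_ne_zero) p
  rw [fderiv_clm_apply hc (differentiableAt_const w)]
  simp

lemma schwarz (a : PC → ℝ) (ha : ContDiff ℝ (⊤ : ℕ∞) a) (p w v : PC) :
    fderiv ℝ (fun q => fderiv ℝ a q w) p v = fderiv ℝ (fun q => fderiv ℝ a q v) p w := by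
  rw [fderiv_apply_vec a ha p w v, fderiv_apply_vec a ha p v w]
  exact second_derivative_symmetric
    (fun y => ((ha.differentiable (by simp)) y).hasFDerivAt)
    ((((ha.fderiv_right (m := 1) (by norm_cast)).differentiable one_ne_zero) p).hasFDerivAt) v w

lemma key (D : Set PC) (hD : IsOpen D) (a b u v : PC → ℝ)
    (ha : ContDiff ℝ (⊤ : ℕ∞) a) (hb : ContDiff ℝ (⊤ : ℕ∞) b) (hv : ContDiff ℝ (⊤ : ℕ∞) v)
    (w₁ w₂ : PC)
    (e1 : ∀ p ∈ D, fderiv ℝ v p w₁ = 4 * (u p * v p) * (1 + a p * b p) * a p)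
    (e2 : ∀ p ∈ D, fderiv ℝ a p w₂ = 2 * (1 + a p * b p) ^ 2 * v p)
    (e3 : ∀ p ∈ D, fderiv ℝ b p w₁ = -(2 * (1 + a p * b p) ^ 2 * u p))
    (p : PC) (hp : p ∈ D) (hN : 1 + a p * b p ≠ 0) :
    fderiv ℝ (fun q => fderiv ℝ a q w₁) p w₂ =
      2 / (1 + a p * b p) * b p * (fderiv ℝ a p w₁ * fderiv ℝ a p w₂) := by
  have hda : Differentiable ℝ a := ha.differentiable (by simp)
  have hdb : Differentiable ℝ b := hb.differentiable (by simp)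
  have hdv : Differentiable ℝ v := hv.differentiable (by simp)
  have hF : Differentiable ℝ (fun q => 1 + a q * b q) :=
    (differentiable_const 1).add ((hda).mul hdb)
  have hF2 : Differentiable ℝ (fun q => (1 + a q * b q) ^ 2) := hF.pow 2
  have hstep : fderiv ℝ (fun q => fderiv ℝ a q w₁) p w₂ =
      fderiv ℝ (fun q => fderiv ℝ a q w₂) p w₁ := schwarz a ha p w₁ w₂
  rw [hstep]
  have heq : (fun q => fderiv ℝ a q w₂) =ᶠ[nhds p]
      (fun q => 2 * (1 + a q * b q) ^ 2 * v q) := by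
    filter_upwards [hD.mem_nhds hp] with q hq using e2 q hq
  rw [heq.fderiv_eq]
  have hmul : fderiv ℝ (fun q => (2 * (1 + a q * b q) ^ 2) * v q) p =
      (2 * (1 + a p * b p) ^ 2) • fderiv ℝ v p +
        v p • fderiv ℝ (fun q => 2 * (1 + a q * b q) ^ 2) p :=
    fderiv_mul ((hF2.const_mul 2) p) (hdv p)
  have h2 : fderiv ℝ (fun q => 2 * (1 + a q * b q) ^ 2) p =
      (2:ℝ) • fderiv ℝ (fun q => (1 + a q * b q) ^ 2) p :=
    fderiv_const_mul (hF2 p) 2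
  have h3 : fderiv ℝ (fun q => (1 + a q * b q) ^ 2) p =
      (1 + a p * b p) • fderiv ℝ (fun q => 1 + a q * b q) p +
      (1 + a p * b p) • fderiv ℝ (fun q => 1 + a q * b q) p := by
    have h : (fun q => (1 + a q * b q) ^ 2) = fun q => (1 + a q * b q) * (1 + a q * b q) := by
      funext q; ring
    rw [h, fderiv_fun_mul (hF p) (hF p)]
  have h4 : fderiv ℝ (fun q => 1 + a q * b q) p = a p • fderiv ℝ b p + b p • fderiv ℝ a p := by
    rw [fderiv_const_add, fderiv_fun_mul (hda p) (hdb p)]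
  rw [hmul]
  simp only [h2, h3, h4, ContinuousLinearMap.add_apply, ContinuousLinearMap.smul_apply,
    smul_eq_mul]
  rw [e1 p hp, e3 p hp, e2 p hp]
  field_simp
  ring

lemma fderiv_fst' {f : PC → PC} {q : PC} (hf : DifferentiableAt ℝ f q) (w : PC) :
    fderiv ℝ (fun x => (f x).1) q w = (fderiv ℝ f q w).1 := by
  rw [(hf.hasFDerivAt.fst).fderiv]; rfl

lemma fderiv_snd' {f : PC → PC} {q : PC} (hf : DifferentiableAt ℝ f q) (w : PC) :
    fderiv ℝ (fun x => (f x).2) q w = (fderiv ℝ f q w).2 := by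
  rw [(hf.hasFDerivAt.snd).fderiv]; rfl

lemma fderiv_LP {f : PC → PC} {q : PC} (hf : DifferentiableAt ℝ f q) (w : PC) :
    fderiv ℝ (fun x => (f x).1 + (f x).2) q w = (fderiv ℝ f q w).1 + (fderiv ℝ f q w).2 := by
  rw [fderiv_fun_add hf.fst hf.snd]
  simp [fderiv_fst' hf w, fderiv_snd' hf w]

lemma fderiv_LM {f : PC → PC} {q : PC} (hf : DifferentiableAt ℝ f q) (w : PC) :
    fderiv ℝ (fun x => (f x).1 - (f x).2) q w = (fderiv ℝ f q w).1 - (fderiv ℝ f q w).2 := by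
  rw [fderiv_fun_sub hf.fst hf.snd]
  simp [fderiv_fst' hf w, fderiv_snd' hf w]

lemma vsplit1 : ((1,1) : PC) = (1,0) + (0,1) := by norm_num
lemma vsplit2 : ((1,-1) : PC) = (1,0) - (0,1) := by norm_num [Prod.ext_iff]

lemma LP_Dz {g : PC → PC} (hg : Differentiable ℝ g) (q : PC) :
    (Dz g q).1 + (Dz g q).2 = (1/2) * fderiv ℝ (fun x => (g x).1 + (g x).2) q (1,1) := by
  rw [fderiv_LP (hg q) _, vsplit1, map_add]
  simp [Dz, dX, dY, pmul, pj]
  ring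

lemma LM_Dz {g : PC → PC} (hg : Differentiable ℝ g) (q : PC) :
    (Dz g q).1 - (Dz g q).2 = (1/2) * fderiv ℝ (fun x => (g x).1 - (g x).2) q (1,-1) := by
  rw [fderiv_LM (hg q) _, vsplit2, map_sub]
  simp [Dz, dX, dY, pmul, pj]
  ring

lemma LP_Dzbar {g : PC → PC} (hg : Differentiable ℝ g) (q : PC) :
    (Dzbar g q).1 + (Dzbar g q).2 = (1/2) * fderiv ℝ (fun x => (g x).1 + (g x).2) q (1,-1) := by
  rw [fderiv_LP (hg q) _, vsplit2, map_sub]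
  simp [Dzbar, dX, dY, pmul, pj]
  ring

lemma LM_Dzbar {g : PC → PC} (hg : Differentiable ℝ g) (q : PC) :
    (Dzbar g q).1 - (Dzbar g q).2 = (1/2) * fderiv ℝ (fun x => (g x).1 - (g x).2) q (1,1) := by
  rw [fderiv_LM (hg q) _, vsplit1, map_add]
  simp [Dzbar, dX, dY, pmul, pj]
  ring

lemma contDiff_Dz {g : PC → PC} (hg : ContDiff ℝ (⊤ : ℕ∞) g) : Differentiable ℝ (Dz g) := by
  have hA : ContDiff ℝ (⊤ : ℕ∞) (fderiv ℝ g) := hg.fderiv_right (by simp)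
  have hX : ContDiff ℝ (⊤ : ℕ∞) (dX g) := hA.clm_apply contDiff_const
  have hY : ContDiff ℝ (⊤ : ℕ∞) (dY g) := hA.clm_apply contDiff_const
  have hpm : ContDiff ℝ (⊤ : ℕ∞) (fun p => pmul pj (dY g p)) := by
    have h : (fun p => pmul pj (dY g p)) = fun p => ((dY g p).2, (dY g p).1) := by
      funext p; simp [pmul, pj]
    rw [h]
    exact ContDiff.prodMk (contDiff_snd.comp hY) (contDiff_fst.comp hY)
  exact (((hX.add hpm).const_smul _) : ContDiff ℝ (⊤ : ℕ∞) (Dz g)).differentiable (by simp)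

/-- If smooth `g, ω̂ : D → ℂ'` satisfy `ω̂_z̄ = −2j|ω̂|²(1+|g|²)ḡ` and
`g_z̄ = j(1+|g|²)²·conj ω̂`, then `g` satisfies the Lorentzian harmonic map equation
`g_{zz̄} − (2ḡ/(1+|g|²))·g_z·g_z̄ = 0` wherever `1 + |g|²` is invertible. -/
theorem stmt_10 (D : Set PC) (hD : IsOpen D) (g ω : PC → PC)
    (hg : ContDiff ℝ (⊤ : ℕ∞) g) (hω : ContDiff ℝ (⊤ : ℕ∞) ω)
    (h1 : ∀ p ∈ D, Dzbar ω p =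
      (-(2 * pnormSq (ω p) * (1 + pnormSq (g p)))) • pmul pj (pconj (g p)))
    (h2 : ∀ p ∈ D, Dzbar g p = ((1 + pnormSq (g p)) ^ 2) • pmul pj (pconj (ω p))) :
    ∀ p ∈ D, 1 + pnormSq (g p) ≠ 0 →
      Dzbar (fun q => Dz g q) p -
        (2 / (1 + pnormSq (g p))) • pmul (pconj (g p)) (pmul (Dz g p) (Dzbar g p)) = 0 := by
  intro p hp hN
  have hgd : Differentiable ℝ g := hg.differentiable (by simp)
  have hωd : Differentiable ℝ ω := hω.differentiable (by simp)
  have hA : ContDiff ℝ (⊤ : ℕ∞) (fun q : PC => (g q).1 + (g q).2) := hg.fst.add hg.snd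
  have hB : ContDiff ℝ (⊤ : ℕ∞) (fun q : PC => (g q).1 - (g q).2) := hg.fst.sub hg.snd
  have hU : ContDiff ℝ (⊤ : ℕ∞) (fun q : PC => (ω q).1 + (ω q).2) := hω.fst.add hω.snd
  have hV : ContDiff ℝ (⊤ : ℕ∞) (fun q : PC => (ω q).1 - (ω q).2) := hω.fst.sub hω.snd
  -- translated first-order equations
  have r2 : ∀ q ∈ D, fderiv ℝ (fun x => (g x).1 + (g x).2) q ((1,-1) : PC) =
      2 * (1 + ((g q).1 + (g q).2) * ((g q).1 - (g q).2)) ^ 2 * ((ω q).1 - (ω q).2) := by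
    intro q hq
    have hc : (Dzbar g q).1 + (Dzbar g q).2 =
        (((1 + pnormSq (g q)) ^ 2) • pmul pj (pconj (ω q))).1 +
        (((1 + pnormSq (g q)) ^ 2) • pmul pj (pconj (ω q))).2 := by rw [h2 q hq]
    rw [LP_Dzbar hgd q] at hc
    simp only [pmul, pj, pconj, pnormSq, Prod.smul_fst, Prod.smul_snd, smul_eq_mul] at hc
    linear_combination 2 * hc
  have r3 : ∀ q ∈ D, fderiv ℝ (fun x => (g x).1 - (g x).2) q ((1,1) : PC) =
      -(2 * (1 + ((g q).1 + (g q).2) * ((g q).1 - (g q).2)) ^ 2 * ((ω q).1 + (ω q).2)) := by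
    intro q hq
    have hc : (Dzbar g q).1 - (Dzbar g q).2 =
        (((1 + pnormSq (g q)) ^ 2) • pmul pj (pconj (ω q))).1 -
        (((1 + pnormSq (g q)) ^ 2) • pmul pj (pconj (ω q))).2 := by rw [h2 q hq]
    rw [LM_Dzbar hgd q] at hc
    simp only [pmul, pj, pconj, pnormSq, Prod.smul_fst, Prod.smul_snd, smul_eq_mul] at hc
    linear_combination 2 * hc
  have r1 : ∀ q ∈ D, fderiv ℝ (fun x => (ω x).1 - (ω x).2) q ((1,1) : PC) =
      4 * (((ω q).1 + (ω q).2) * ((ω q).1 - (ω q).2)) *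
        (1 + ((g q).1 + (g q).2) * ((g q).1 - (g q).2)) * ((g q).1 + (g q).2) := by
    intro q hq
    have hc : (Dzbar ω q).1 - (Dzbar ω q).2 =
        ((-(2 * pnormSq (ω q) * (1 + pnormSq (g q)))) • pmul pj (pconj (g q))).1 -
        ((-(2 * pnormSq (ω q) * (1 + pnormSq (g q)))) • pmul pj (pconj (g q))).2 := by
      rw [h1 q hq]
    rw [LM_Dzbar hωd q] at hc
    simp only [pmul, pj, pconj, pnormSq, Prod.smul_fst, Prod.smul_snd, smul_eq_mul] at hc
    linear_combination 2 * hc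
  have rU : ∀ q ∈ D, fderiv ℝ (fun x => (ω x).1 + (ω x).2) q ((1,-1) : PC) =
      -(4 * (((ω q).1 + (ω q).2) * ((ω q).1 - (ω q).2)) *
        (1 + ((g q).1 + (g q).2) * ((g q).1 - (g q).2)) * ((g q).1 - (g q).2)) := by
    intro q hq
    have hc : (Dzbar ω q).1 + (Dzbar ω q).2 =
        ((-(2 * pnormSq (ω q) * (1 + pnormSq (g q)))) • pmul pj (pconj (g q))).1 +
        ((-(2 * pnormSq (ω q) * (1 + pnormSq (g q)))) • pmul pj (pconj (g q))).2 := by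
      rw [h1 q hq]
    rw [LP_Dzbar hωd q] at hc
    simp only [pmul, pj, pconj, pnormSq, Prod.smul_fst, Prod.smul_snd, smul_eq_mul] at hc
    linear_combination 2 * hc
  have hNab : 1 + ((g p).1 + (g p).2) * ((g p).1 - (g p).2) ≠ 0 := by
    have h : 1 + ((g p).1 + (g p).2) * ((g p).1 - (g p).2) = 1 + pnormSq (g p) := by
      simp [pnormSq]; ring
    rw [h]; exact hN
  have hNba : 1 + ((g p).1 - (g p).2) * ((g p).1 + (g p).2) ≠ 0 := by
    have h : 1 + ((g p).1 - (g p).2) * ((g p).1 + (g p).2) =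
        1 + ((g p).1 + (g p).2) * ((g p).1 - (g p).2) := by ring
    rw [h]; exact hNab
  -- second order identities from the key lemma
  have KA := key D hD (fun q : PC => (g q).1 + (g q).2) (fun q : PC => (g q).1 - (g q).2)
    (fun q : PC => (ω q).1 + (ω q).2) (fun q : PC => (ω q).1 - (ω q).2)
    hA hB hV ((1,1) : PC) ((1,-1) : PC) r1 r2 r3 p hp hNab
  have KB := key D hD (fun q : PC => (g q).1 - (g q).2) (fun q : PC => (g q).1 + (g q).2)
    (fun q : PC => -((ω q).1 - (ω q).2)) (fun q : PC => -((ω q).1 + (ω q).2))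
    hB hA hU.neg ((1,-1) : PC) ((1,1) : PC)
    (by
      intro q hq
      have h := rU q hq
      rw [fderiv_fun_neg]
      simp only [ContinuousLinearMap.neg_apply]
      linear_combination -h)
    (by
      intro q hq
      have h := r3 q hq
      linear_combination h)
    (by
      intro q hq
      have h := r2 q hq
      linear_combination h)
    p hp hNba
  -- differentiability of the inner first-order expressions
  have hAd : Differentiable ℝ (fun x => fderiv ℝ (fun y => (g y).1 + (g y).2) x ((1,1) : PC)) :=
    ((hA.fderiv_right (m := 1) (by norm_cast)).clm_apply contDiff_const).differentiable one_ne_zero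
  have hBd : Differentiable ℝ (fun x => fderiv ℝ (fun y => (g y).1 - (g y).2) x ((1,-1) : PC)) :=
    ((hB.fderiv_right (m := 1) (by norm_cast)).clm_apply contDiff_const).differentiable one_ne_zero
  have hDzg : Differentiable ℝ (Dz g) := contDiff_Dz hg
  -- the second derivative expressions
  have hE1P : (Dzbar (fun q => Dz g q) p).1 + (Dzbar (fun q => Dz g q) p).2 =
      (1/4) * fderiv ℝ (fun x => fderiv ℝ (fun y => (g y).1 + (g y).2) x ((1,1) : PC)) p
        ((1,-1) : PC) := by
    rw [LP_Dzbar hDzg p]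
    have hfun : (fun x => (Dz g x).1 + (Dz g x).2) =
        fun x => (1/2) * fderiv ℝ (fun y => (g y).1 + (g y).2) x ((1,1) : PC) :=
      funext fun x => LP_Dz hgd x
    rw [hfun, fderiv_const_mul (hAd p) (1/2)]
    simp only [ContinuousLinearMap.smul_apply, smul_eq_mul]
    ring
  have hE1M : (Dzbar (fun q => Dz g q) p).1 - (Dzbar (fun q => Dz g q) p).2 =
      (1/4) * fderiv ℝ (fun x => fderiv ℝ (fun y => (g y).1 - (g y).2) x ((1,-1) : PC)) p
        ((1,1) : PC) := by
    rw [LM_Dzbar hDzg p]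
    have hfun : (fun x => (Dz g x).1 - (Dz g x).2) =
        fun x => (1/2) * fderiv ℝ (fun y => (g y).1 - (g y).2) x ((1,-1) : PC) :=
      funext fun x => LM_Dz hgd x
    rw [hfun, fderiv_const_mul (hBd p) (1/2)]
    simp only [ContinuousLinearMap.smul_apply, smul_eq_mul]
    ring
  rw [KA] at hE1P
  rw [KB] at hE1M
  -- first derivative component formulas at p
  have dP := LP_Dz hgd p
  have dM := LM_Dz hgd p
  have dbP := LP_Dzbar hgd p
  have dbM := LM_Dzbar hgd p
  -- the combined P and M equations
  have hNval : 1 + pnormSq (g p) = 1 + ((g p).1 + (g p).2) * ((g p).1 - (g p).2) := by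
    simp [pnormSq]; ring
  have hE2P : (pmul (pconj (g p)) (pmul (Dz g p) (Dzbar g p))).1 +
      (pmul (pconj (g p)) (pmul (Dz g p) (Dzbar g p))).2 =
      ((g p).1 - (g p).2) * (((Dz g p).1 + (Dz g p).2) * ((Dzbar g p).1 + (Dzbar g p).2)) := by
    simp [pmul, pconj]; ring
  have hE2M : (pmul (pconj (g p)) (pmul (Dz g p) (Dzbar g p))).1 -
      (pmul (pconj (g p)) (pmul (Dz g p) (Dzbar g p))).2 =
      ((g p).1 + (g p).2) * (((Dz g p).1 - (Dz g p).2) * ((Dzbar g p).1 - (Dzbar g p).2)) := by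
    simp [pmul, pconj]; ring
  have hP : ((Dzbar (fun q => Dz g q) p).1 + (Dzbar (fun q => Dz g q) p).2) -
      (2 / (1 + pnormSq (g p))) *
        ((pmul (pconj (g p)) (pmul (Dz g p) (Dzbar g p))).1 +
         (pmul (pconj (g p)) (pmul (Dz g p) (Dzbar g p))).2) = 0 := by
    rw [hE1P, hE2P, dP, dbP, hNval]
    field_simp
    ring
  have hM : ((Dzbar (fun q => Dz g q) p).1 - (Dzbar (fun q => Dz g q) p).2) -
      (2 / (1 + pnormSq (g p))) *
        ((pmul (pconj (g p)) (pmul (Dz g p) (Dzbar g p))).1 -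
         (pmul (pconj (g p)) (pmul (Dz g p) (Dzbar g p))).2) = 0 := by
    rw [hE1M, hE2M, dM, dbM, hNval]
    field_simp
    ring
  apply Prod.ext
  · show (Dzbar (fun q => Dz g q) p).1 -
        (2 / (1 + pnormSq (g p))) * (pmul (pconj (g p)) (pmul (Dz g p) (Dzbar g p))).1 = 0
    linear_combination (hP + hM) / 2
  · show (Dzbar (fun q => Dz g q) p).2 -
        (2 / (1 + pnormSq (g p))) * (pmul (pconj (g p)) (pmul (Dz g p) (Dzbar g p))).2 = 0
    linear_combination (hP - hM) / 2
end
end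

section
/- Let g : D → ℂ' be smooth with 1 + |g|² invertible everywhere, and define ω̂ := −j·(ḡ)_z/(1+|g|²)². If g satisfies g_{zz̄} = (2ḡ/(1+|g|²))·g_z·g_z̄, then the pair (g, ω̂) satisfies g_z̄ = j(1+|g|²)²·conj(ω̂) and ω̂_z̄ = −2j|ω̂|²(1+|g|²)·ḡ. -/
noncomputable section

-- helpers
def pd (v : PC) (f : PC → ℝ) : PC → ℝ := fun q => fderiv ℝ f q v

def As (g : PC → PC) : PC → ℝ := fun q => (g q).1
def Bs (g : PC → PC) : PC → ℝ := fun q => (g q).2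

lemma pd_contDiff {f : PC → ℝ} (hf : ContDiff ℝ (⊤ : ℕ∞) f) (v : PC) : ContDiff ℝ (⊤ : ℕ∞) (pd v f) :=
  (hf.fderiv_right (by simp)).clm_apply contDiff_const

lemma pd_diff {f : PC → ℝ} (hf : ContDiff ℝ (⊤ : ℕ∞) f) (v q : PC) : DifferentiableAt ℝ (pd v f) q :=
  ((pd_contDiff hf v).differentiable (by simp)) q

lemma pd_fderiv {f : PC → ℝ} (hf : ContDiff ℝ (⊤ : ℕ∞) f) (v p w : PC) :
    fderiv ℝ (pd v f) p w = fderiv ℝ (fderiv ℝ f) p w v := by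
  unfold pd
  rw [fderiv_clm_apply (((hf.fderiv_right (m := 1) (WithTop.coe_le_coe.mpr le_top)).differentiable one_ne_zero) p) (differentiableAt_const v)]
  simp

lemma pd_swap {f : PC → ℝ} (hf : ContDiff ℝ (⊤ : ℕ∞) f) (p v w : PC) :
    pd w (pd v f) p = pd v (pd w f) p := by
  show fderiv ℝ (pd v f) p w = fderiv ℝ (pd w f) p v
  rw [pd_fderiv hf, pd_fderiv hf]
  exact (hf.contDiffAt.isSymmSndFDerivAt (by rw [minSmoothness_of_isRCLikeNormedField]; exact WithTop.coe_le_coe.mpr le_top)).eq w v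

lemma fderiv_pair' {F1 F2 : PC → ℝ} {q : PC} (h1 : DifferentiableAt ℝ F1 q)
    (h2 : DifferentiableAt ℝ F2 q) (v : PC) :
    fderiv ℝ (fun q => (F1 q, F2 q)) q v = (fderiv ℝ F1 q v, fderiv ℝ F2 q v) := by
  rw [DifferentiableAt.fderiv_prodMk h1 h2]; rfl

lemma Dz_pair {F1 F2 : PC → ℝ} {q : PC} (h1 : DifferentiableAt ℝ F1 q)
    (h2 : DifferentiableAt ℝ F2 q) :
    Dz (fun q => (F1 q, F2 q)) q =
      ((1/2) * pd (1,0) F1 q + (1/2) * pd (0,1) F2 q,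
       (1/2) * pd (1,0) F2 q + (1/2) * pd (0,1) F1 q) := by
  simp only [Dz, dX, dY, fderiv_pair' h1 h2, pmul, pj, pd]
  simp [Prod.ext_iff]
  constructor <;> ring

lemma Dzbar_pair {F1 F2 : PC → ℝ} {q : PC} (h1 : DifferentiableAt ℝ F1 q)
    (h2 : DifferentiableAt ℝ F2 q) :
    Dzbar (fun q => (F1 q, F2 q)) q =
      ((1/2) * pd (1,0) F1 q + (-(1/2)) * pd (0,1) F2 q,
       (1/2) * pd (1,0) F2 q + (-(1/2)) * pd (0,1) F1 q) := by
  simp only [Dzbar, dX, dY, fderiv_pair' h1 h2, pmul, pj, pd]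
  simp [Prod.ext_iff]
  constructor <;> ring

lemma pd_neg (F : PC → ℝ) (v q : PC) : pd v (fun q => -F q) q = -pd v F q := by
  unfold pd; rw [fderiv_fun_neg]; simp

lemma pd_comb {F1 F2 : PC → ℝ} {p : PC} (h1 : DifferentiableAt ℝ F1 p)
    (h2 : DifferentiableAt ℝ F2 p) (r s : ℝ) (v : PC) :
    pd v (fun q => r * F1 q + s * F2 q) p = r * pd v F1 p + s * pd v F2 p := by
  unfold pd
  rw [fderiv_fun_add (h1.const_mul r) (h2.const_mul s), fderiv_const_mul h1 r, fderiv_const_mul h2 s]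
  simp

lemma pd_mul {F1 F2 : PC → ℝ} {p : PC} (h1 : DifferentiableAt ℝ F1 p)
    (h2 : DifferentiableAt ℝ F2 p) (v : PC) :
    pd v (fun q => F1 q * F2 q) p = pd v F1 p * F2 p + F1 p * pd v F2 p := by
  unfold pd; rw [fderiv_fun_mul h1 h2]; simp; ring

lemma pmul_mk (a b c d : ℝ) : pmul (a,b) (c,d) = (a*c + b*d, a*d + b*c) := rfl
lemma pconj_mk (a b : ℝ) : pconj (a,b) = (a,-b) := rfl
lemma pnormSq_mk (a b : ℝ) : pnormSq (a,b) = a^2 - b^2 := rfl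

lemma alg_key (n a b ax ay bx by' ayy axy byy bxy : ℝ) (hn : 1 + n ≠ 0) :
    (1 / 2 *
          (-2 / (1 + n) ^ 3 * (2 * a * ax - 2 * b * bx) * (1 / 2 * bx + -(1 / 2) * ay) +
            1 / (1 + n) ^ 2 *
              (1 / 2 * (byy + 2 / (1 + n) * (2 * a * (ax * bx - ay * by') - b * (ax ^ 2 + bx ^ 2 - ay ^ 2 - by' ^ 2))) +
                -(1 / 2) * axy)) +
        -(1 / 2) *
          (-2 / (1 + n) ^ 3 * (2 * a * ay - 2 * b * by') * (1 / 2 * by' + -(1 / 2) * ax) +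
            1 / (1 + n) ^ 2 * (1 / 2 * byy + -(1 / 2) * axy)) =
      -(2 *
              ((1 / (1 + n) ^ 2 * (1 / 2 * bx + -(1 / 2) * ay)) ^ 2 -
                (1 / (1 + n) ^ 2 * (1 / 2 * by' + -(1 / 2) * ax)) ^ 2) *
            (1 + n)) *
        (0 * a + 1 * -b)) ∧
    (1 / 2 *
          (-2 / (1 + n) ^ 3 * (2 * a * ax - 2 * b * bx) * (1 / 2 * by' + -(1 / 2) * ax) +
            1 / (1 + n) ^ 2 *
              (1 / 2 * bxy +
                -(1 / 2) *
                  (ayy + 2 / (1 + n) * (a * (ax ^ 2 + bx ^ 2 - ay ^ 2 - by' ^ 2) - 2 * b * (ax * bx - ay * by'))))) +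
        -(1 / 2) *
          (-2 / (1 + n) ^ 3 * (2 * a * ay - 2 * b * by') * (1 / 2 * bx + -(1 / 2) * ay) +
            1 / (1 + n) ^ 2 * (1 / 2 * bxy + -(1 / 2) * ayy)) =
      -(2 *
              ((1 / (1 + n) ^ 2 * (1 / 2 * bx + -(1 / 2) * ay)) ^ 2 -
                (1 / (1 + n) ^ 2 * (1 / 2 * by' + -(1 / 2) * ax)) ^ 2) *
            (1 + n)) *
        (0 * -b + 1 * a)) := by
  constructor <;> (field_simp; ring)


set_option maxHeartbeats 2000000 in
/-- Conversely, if smooth `g` with `1 + |g|²` invertible everywhere satisfies the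
harmonic map equation, then `(g, ω̂)` with `ω̂ := −j(ḡ)_z/(1+|g|²)²` satisfies the
structure equations `g_z̄ = j(1+|g|²)²·conj ω̂` and `ω̂_z̄ = −2j|ω̂|²(1+|g|²)ḡ`. -/
theorem stmt_11 (D : Set PC) (hD : IsOpen D) (g : PC → PC) (hg : ContDiff ℝ (⊤ : ℕ∞) g)
    (hinv : ∀ p, 1 + pnormSq (g p) ≠ 0)
    (ω : PC → PC)
    (hωdef : ω = fun p =>
      (1 / (1 + pnormSq (g p)) ^ 2) • pmul (-pj) (Dz (fun q => pconj (g q)) p))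
    (hharm : ∀ p ∈ D, Dzbar (fun q => Dz g q) p =
      (2 / (1 + pnormSq (g p))) • pmul (pconj (g p)) (pmul (Dz g p) (Dzbar g p))) :
    ∀ p ∈ D,
      Dzbar g p = ((1 + pnormSq (g p)) ^ 2) • pmul pj (pconj (ω p)) ∧
      Dzbar ω p =
        (-(2 * pnormSq (ω p) * (1 + pnormSq (g p)))) • pmul pj (pconj (g p)) := by
  intro p hp
  have hA : ContDiff ℝ (⊤ : ℕ∞) (As g) := hg.fst
  have hB : ContDiff ℝ (⊤ : ℕ∞) (Bs g) := hg.snd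
  have dA : ∀ q, DifferentiableAt ℝ (As g) q := fun q => (hA.differentiable (by simp)) q
  have dB : ∀ q, DifferentiableAt ℝ (Bs g) q := fun q => (hB.differentiable (by simp)) q
  have hDzg : ∀ q, Dz g q = ((1/2) * pd (1,0) (As g) q + (1/2) * pd (0,1) (Bs g) q,
      (1/2) * pd (1,0) (Bs g) q + (1/2) * pd (0,1) (As g) q) := by
    intro q
    show Dz (fun q => (As g q, Bs g q)) q = _
    rw [Dz_pair (dA q) (dB q)]
  have hDzbarg : ∀ q, Dzbar g q = ((1/2) * pd (1,0) (As g) q + (-(1/2)) * pd (0,1) (Bs g) q,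
      (1/2) * pd (1,0) (Bs g) q + (-(1/2)) * pd (0,1) (As g) q) := by
    intro q
    show Dzbar (fun q => (As g q, Bs g q)) q = _
    rw [Dzbar_pair (dA q) (dB q)]
  have hωfun : ω = fun q =>
      ((1/(1 + pnormSq (g q))^2) * ((1/2) * pd (1,0) (Bs g) q + (-(1/2)) * pd (0,1) (As g) q),
       (1/(1 + pnormSq (g q))^2) * ((1/2) * pd (0,1) (Bs g) q + (-(1/2)) * pd (1,0) (As g) q)) := by
    rw [hωdef]; funext q
    rw [show (fun q => pconj (g q)) = fun q => (As g q, -Bs g q) from rfl,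
       Dz_pair (dA q) ((dB q).fun_neg)]
    simp only [pmul, pj, pd_neg, Prod.smul_mk, smul_eq_mul, Prod.mk.injEq, Prod.neg_mk]
    constructor <;> ring
  -- hharm components
  have hh := hharm p hp
  rw [show (fun q => Dz g q) = (fun q =>
      ((1/2) * pd (1,0) (As g) q + (1/2) * pd (0,1) (Bs g) q,
       (1/2) * pd (1,0) (Bs g) q + (1/2) * pd (0,1) (As g) q)) from funext hDzg] at hh
  have dP : DifferentiableAt ℝ (fun q => (1/2) * pd (1,0) (As g) q + (1/2) * pd (0,1) (Bs g) q) p :=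
    ((pd_diff hA (1,0) p).const_mul _).add ((pd_diff hB (0,1) p).const_mul _)
  have dQ : DifferentiableAt ℝ (fun q => (1/2) * pd (1,0) (Bs g) q + (1/2) * pd (0,1) (As g) q) p :=
    ((pd_diff hB (1,0) p).const_mul _).add ((pd_diff hA (0,1) p).const_mul _)
  rw [Dzbar_pair dP dQ,
      pd_comb (pd_diff hA (1,0) p) (pd_diff hB (0,1) p) (1/2) (1/2) (1,0),
      pd_comb (pd_diff hA (1,0) p) (pd_diff hB (0,1) p) (1/2) (1/2) (0,1),
      pd_comb (pd_diff hB (1,0) p) (pd_diff hA (0,1) p) (1/2) (1/2) (1,0),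
      pd_comb (pd_diff hB (1,0) p) (pd_diff hA (0,1) p) (1/2) (1/2) (0,1),
      hDzg p, hDzbarg p,
      show pconj (g p) = (As g p, -Bs g p) from rfl] at hh
  rw [pd_swap hA p (1,0) (0,1), pd_swap hB p (1,0) (0,1)] at hh
  simp only [pmul, Prod.smul_mk, smul_eq_mul, Prod.mk.injEq] at hh
  obtain ⟨hh1, hh2⟩ := hh
  have haxx : pd (1,0) (pd (1,0) (As g)) p = pd (0,1) (pd (0,1) (As g)) p
      + (2/(1 + pnormSq (g p))) * (As g p *
          ((pd (1,0) (As g) p)^2 + (pd (1,0) (Bs g) p)^2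
            - (pd (0,1) (As g) p)^2 - (pd (0,1) (Bs g) p)^2)
        - 2 * Bs g p * (pd (1,0) (As g) p * pd (1,0) (Bs g) p
            - pd (0,1) (As g) p * pd (0,1) (Bs g) p)) := by
    linear_combination 4 * hh1
  have hbxx : pd (1,0) (pd (1,0) (Bs g)) p = pd (0,1) (pd (0,1) (Bs g)) p
      + (2/(1 + pnormSq (g p))) * (2 * As g p * (pd (1,0) (As g) p * pd (1,0) (Bs g) p
            - pd (0,1) (As g) p * pd (0,1) (Bs g) p)
        - Bs g p * ((pd (1,0) (As g) p)^2 + (pd (1,0) (Bs g) p)^2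
            - (pd (0,1) (As g) p)^2 - (pd (0,1) (Bs g) p)^2)) := by
    linear_combination 4 * hh2
  -- derivative of the conformal factor
  have hNeq : (fun q => 1 + pnormSq (g q)) = fun q => 1 + (As g q * As g q - Bs g q * Bs g q) := by
    funext q; simp [pnormSq, As, Bs]; ring
  have dN : ∀ q, DifferentiableAt ℝ (fun q => 1 + pnormSq (g q)) q := by
    rw [hNeq]
    exact fun q => (differentiableAt_const _).add (((dA q).mul (dA q)).sub ((dB q).mul (dB q)))
  have hNder : ∀ v, pd v (fun q => 1 + pnormSq (g q)) p
      = 2 * As g p * pd v (As g) p - 2 * Bs g p * pd v (Bs g) p := by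
    intro v
    show fderiv ℝ (fun q => 1 + pnormSq (g q)) p v = _
    rw [hNeq, fderiv_const_add, fderiv_fun_sub ((dA p).fun_mul (dA p)) ((dB p).fun_mul (dB p))]
    have h1 := pd_mul (dA p) (dA p) v
    have h2 := pd_mul (dB p) (dB p) v
    simp only [pd] at h1 h2
    simp [h1, h2, pd]; ring
  have hder2 : HasDerivAt (fun t : ℝ => 1/t^2) (-2/(1 + pnormSq (g p))^3) (1 + pnormSq (g p)) := by
    have h := (hasDerivAt_pow 2 (1 + pnormSq (g p))).inv (pow_ne_zero 2 (hinv p))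
    have he : (fun t : ℝ => 1/t^2) = fun t : ℝ => (t^2)⁻¹ := by funext t; rw [one_div]
    rw [he]
    refine h.congr_deriv ?_
    field_simp [hinv p]
    ring
  have hcf : HasFDerivAt (fun q => 1/(1 + pnormSq (g q))^2)
      ((-2/(1 + pnormSq (g p))^3) • fderiv ℝ (fun q => 1 + pnormSq (g q)) p) p :=
    hder2.comp_hasFDerivAt (h₂ := fun t : ℝ => 1/t^2) (f := fun q => 1 + pnormSq (g q)) p (dN p).hasFDerivAt
  have dcf : DifferentiableAt ℝ (fun q => 1/(1 + pnormSq (g q))^2) p := hcf.differentiableAt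
  have hcfder : ∀ v, pd v (fun q => 1/(1 + pnormSq (g q))^2) p
      = (-2/(1 + pnormSq (g p))^3) * pd v (fun q => 1 + pnormSq (g q)) p := by
    intro v
    show fderiv ℝ (fun q => 1/(1 + pnormSq (g q))^2) p v = _
    rw [hcf.fderiv]
    simp [pd]
  have dk1 : DifferentiableAt ℝ
      (fun q => (1/2) * pd (1,0) (Bs g) q + (-(1/2)) * pd (0,1) (As g) q) p :=
    ((pd_diff hB (1,0) p).const_mul _).add ((pd_diff hA (0,1) p).const_mul _)
  have dk2 : DifferentiableAt ℝ
      (fun q => (1/2) * pd (0,1) (Bs g) q + (-(1/2)) * pd (1,0) (As g) q) p :=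
    ((pd_diff hB (0,1) p).const_mul _).add ((pd_diff hA (1,0) p).const_mul _)
  constructor
  · rw [hDzbarg p]
    simp only [hωfun]
    simp only [pj, pconj_mk, pmul_mk, Prod.smul_mk, smul_eq_mul, Prod.mk.injEq]
    constructor <;> (field_simp [hinv p]; ring)
  · simp only [hωfun]
    rw [Dzbar_pair (dcf.fun_mul dk1) (dcf.fun_mul dk2),
        pd_mul dcf dk1 (1,0), pd_mul dcf dk1 (0,1),
        pd_mul dcf dk2 (1,0), pd_mul dcf dk2 (0,1),
        hcfder (1,0), hcfder (0,1), hNder (1,0), hNder (0,1),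
        pd_comb (pd_diff hB (1,0) p) (pd_diff hA (0,1) p) (1/2) (-(1/2)) (1,0),
        pd_comb (pd_diff hB (1,0) p) (pd_diff hA (0,1) p) (1/2) (-(1/2)) (0,1),
        pd_comb (pd_diff hB (0,1) p) (pd_diff hA (1,0) p) (1/2) (-(1/2)) (1,0),
        pd_comb (pd_diff hB (0,1) p) (pd_diff hA (1,0) p) (1/2) (-(1/2)) (0,1)]
    rw [pd_swap hA p (1,0) (0,1), pd_swap hB p (1,0) (0,1)]
    rw [haxx, hbxx, show pconj (g p) = (As g p, -Bs g p) from rfl]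
    simp only [pj, pconj_mk, pmul_mk, pnormSq_mk, Prod.smul_mk, smul_eq_mul, Prod.mk.injEq]
    set n := pnormSq (g p) with hn
    set a := As g p
    set b := Bs g p
    set ax := pd (1,0) (As g) p
    set ay := pd (0,1) (As g) p
    set bx := pd (1,0) (Bs g) p
    set by' := pd (0,1) (Bs g) p
    set ayy := pd (0,1) (pd (0,1) (As g)) p
    set axy := pd (1,0) (pd (0,1) (As g)) p
    set byy := pd (0,1) (pd (0,1) (Bs g)) p
    set bxy := pd (1,0) (pd (0,1) (Bs g)) p
    exact alg_key n a b ax ay bx by' ayy axy byy bxy (by rw [hn]; exact hinv p)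
end
end

section
/- Let g, ω̂ satisfy the structure equations ω̂_z̄ = −2j|ω̂|²(1+|g|²)ḡ and g_z̄ = j(1+|g|²)²·conj(ω̂). Then the function Q_AR := −j·g_z·ω̂ satisfies (Q_AR)_z̄ = 0, i.e. the Abresch–Rosenberg differential of a timelike minimal surface is para-holomorphic. -/
noncomputable section

lemma fderiv_pmul {f h : PC → PC} {p : PC}
    (hf : DifferentiableAt ℝ f p) (hh : DifferentiableAt ℝ h p) (v : PC) :
    fderiv ℝ (fun q => pmul (f q) (h q)) p v
      = pmul (fderiv ℝ f p v) (h p) + pmul (f p) (fderiv ℝ h p v) := by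
  have F1 := hf.hasFDerivAt.fst
  have F2 := hf.hasFDerivAt.snd
  have H1 := hh.hasFDerivAt.fst
  have H2 := hh.hasFDerivAt.snd
  have A := HasFDerivAt.prodMk ((F1.mul H1).add (F2.mul H2)) ((F1.mul H2).add (F2.mul H1))
  have H : HasFDerivAt (fun q => pmul (f q) (h q)) _ p := A
  rw [H.fderiv]
  simp [pmul, Prod.ext_iff]
  constructor <;> ring

lemma fderiv_pconj {f : PC → PC} {p : PC} (hf : DifferentiableAt ℝ f p) (v : PC) :
    fderiv ℝ (fun q => pconj (f q)) p v = pconj (fderiv ℝ f p v) := by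
  have A := HasFDerivAt.prodMk hf.hasFDerivAt.fst hf.hasFDerivAt.snd.neg
  have H : HasFDerivAt (fun q => pconj (f q)) _ p := A
  rw [H.fderiv]
  simp [pconj, Prod.ext_iff]

lemma diffAt_pmul {f h : PC → PC} {p : PC}
    (hf : DifferentiableAt ℝ f p) (hh : DifferentiableAt ℝ h p) :
    DifferentiableAt ℝ (fun q => pmul (f q) (h q)) p :=
  DifferentiableAt.prodMk ((hf.fst.mul hh.fst).add (hf.snd.mul hh.snd))
    ((hf.fst.mul hh.snd).add (hf.snd.mul hh.fst))

lemma diffAt_pconj {f : PC → PC} {p : PC} (hf : DifferentiableAt ℝ f p) :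
    DifferentiableAt ℝ (fun q => pconj (f q)) p :=
  DifferentiableAt.prodMk hf.fst hf.snd.neg

lemma Dz_pmul {f h : PC → PC} {p : PC}
    (hf : DifferentiableAt ℝ f p) (hh : DifferentiableAt ℝ h p) :
    Dz (fun q => pmul (f q) (h q)) p
      = pmul (Dz f p) (h p) + pmul (f p) (Dz h p) := by
  unfold Dz dX dY
  rw [fderiv_pmul hf hh, fderiv_pmul hf hh]
  simp [pmul, pj, Prod.ext_iff]
  constructor <;> ring

lemma Dzbar_pmul {f h : PC → PC} {p : PC}
    (hf : DifferentiableAt ℝ f p) (hh : DifferentiableAt ℝ h p) :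
    Dzbar (fun q => pmul (f q) (h q)) p
      = pmul (Dzbar f p) (h p) + pmul (f p) (Dzbar h p) := by
  unfold Dzbar dX dY
  rw [fderiv_pmul hf hh, fderiv_pmul hf hh]
  simp [pmul, pj, Prod.ext_iff]
  constructor <;> ring

lemma Dz_pconj {f : PC → PC} {p : PC} (hf : DifferentiableAt ℝ f p) :
    Dz (fun q => pconj (f q)) p = pconj (Dzbar f p) := by
  unfold Dz Dzbar dX dY
  rw [fderiv_pconj hf, fderiv_pconj hf]
  simp [pmul, pconj, pj, Prod.ext_iff]
  constructor <;> ring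

lemma Dz_const (c : PC) (p : PC) : Dz (fun _ => c) p = 0 := by
  unfold Dz dX dY
  simp [pmul, pj, Prod.ext_iff]

lemma Dzbar_const (c : PC) (p : PC) : Dzbar (fun _ => c) p = 0 := by
  unfold Dzbar dX dY
  simp [pmul, pj, Prod.ext_iff]

lemma Dz_const_add (c : PC) {f : PC → PC} (p : PC) :
    Dz (fun q => c + f q) p = Dz f p := by
  unfold Dz dX dY
  rw [fderiv_const_add]

lemma Dz_congr {f h : PC → PC} {p : PC} (he : f =ᶠ[nhds p] h) : Dz f p = Dz h p := by
  unfold Dz dX dY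
  rw [he.fderiv_eq]

-- test: smul vs pmul embedding
example (r : ℝ) (z : PC) : r • z = pmul (r, 0) z := by
  simp [pmul, Prod.ext_iff]

/-- If `(g, ω̂)` satisfy the structure equations `ω̂_z̄ = −2j|ω̂|²(1+|g|²)ḡ` and
`g_z̄ = j(1+|g|²)²·conj ω̂`, then the Abresch–Rosenberg differential
`Q_AR = −j·g_z·ω̂` is para-holomorphic: `(Q_AR)_z̄ = 0`. -/
theorem stmt_19 (D : Set PC) (hD : IsOpen D) (g ω : PC → PC)
    (hg : ContDiff ℝ (⊤ : ℕ∞) g) (hω : ContDiff ℝ (⊤ : ℕ∞) ω)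
    (hcomm : ∀ p ∈ D, Dzbar (fun q => Dz g q) p = Dz (fun q => Dzbar g q) p)
    (h1 : ∀ p ∈ D, Dzbar ω p =
      (-(2 * pnormSq (ω p) * (1 + pnormSq (g p)))) • pmul pj (pconj (g p)))
    (h2 : ∀ p ∈ D, Dzbar g p = ((1 + pnormSq (g p)) ^ 2) • pmul pj (pconj (ω p))) :
    ∀ p ∈ D, Dzbar (fun q => pmul (-pj) (pmul (Dz g q) (ω q))) p = 0 := by
  intro p hp
  have difg : DifferentiableAt ℝ g p := (hg.differentiable (by simp)).differentiableAt
  have difω : DifferentiableAt ℝ ω p := (hω.differentiable (by simp)).differentiableAt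
  have dcg : DifferentiableAt ℝ (fun q => pconj (g q)) p := diffAt_pconj difg
  have dcω : DifferentiableAt ℝ (fun q => pconj (ω q)) p := diffAt_pconj difω
  have dU : DifferentiableAt ℝ (fun q => pone + pmul (g q) (pconj (g q))) p :=
    (differentiableAt_const _).add (diffAt_pmul difg dcg)
  have dUU : DifferentiableAt ℝ
      (fun q => pmul (pone + pmul (g q) (pconj (g q))) (pone + pmul (g q) (pconj (g q)))) p :=
    diffAt_pmul dU dU
  have dW : DifferentiableAt ℝ (fun q => pmul pj (pconj (ω q))) p :=
    diffAt_pmul (differentiableAt_const _) dcω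
  have cg' : ContDiff ℝ (⊤ : ℕ∞) (fderiv ℝ g) := hg.fderiv_right (by simp)
  have cdX : ContDiff ℝ (⊤ : ℕ∞) (fun q => fderiv ℝ g q ((1, 0) : PC)) :=
    cg'.clm_apply contDiff_const
  have cdY : ContDiff ℝ (⊤ : ℕ∞) (fun q => fderiv ℝ g q ((0, 1) : PC)) :=
    cg'.clm_apply contDiff_const
  have dDzg : DifferentiableAt ℝ (fun q => Dz g q) p := by
    have hrfl : (fun q => Dz g q)
        = fun q => (1/2 : ℝ) • (fderiv ℝ g q ((1,0) : PC) + pmul pj (fderiv ℝ g q ((0,1) : PC))) := rfl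
    rw [hrfl]
    exact (((cdX.differentiable (by simp)).differentiableAt).add
      (diffAt_pmul (differentiableAt_const pj)
        ((cdY.differentiable (by simp)).differentiableAt))).const_smul (1/2 : ℝ)
  -- mixed derivative via the structure equation h2
  have e2 : Dzbar (fun q => Dz g q) p
      = Dz (fun q => pmul (pmul (pone + pmul (g q) (pconj (g q))) (pone + pmul (g q) (pconj (g q))))
          (pmul pj (pconj (ω q)))) p := by
    rw [hcomm p hp]
    apply Dz_congr
    filter_upwards [hD.mem_nhds hp] with q hq
    rw [h2 q hq]
    simp [pmul, pconj, pone, pnormSq, pj, Prod.ext_iff]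
    constructor <;> ring
  have e3 : Dz (fun q => pmul (pmul (pone + pmul (g q) (pconj (g q))) (pone + pmul (g q) (pconj (g q))))
          (pmul pj (pconj (ω q)))) p
      = pmul (Dz (fun q => pmul (pone + pmul (g q) (pconj (g q))) (pone + pmul (g q) (pconj (g q)))) p)
          (pmul pj (pconj (ω p)))
        + pmul (pmul (pone + pmul (g p) (pconj (g p))) (pone + pmul (g p) (pconj (g p))))
          (Dz (fun q => pmul pj (pconj (ω q))) p) := Dz_pmul dUU dW
  have e4 : Dz (fun q => pmul (pone + pmul (g q) (pconj (g q))) (pone + pmul (g q) (pconj (g q)))) p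
      = pmul (Dz (fun q => pone + pmul (g q) (pconj (g q))) p) (pone + pmul (g p) (pconj (g p)))
        + pmul (pone + pmul (g p) (pconj (g p))) (Dz (fun q => pone + pmul (g q) (pconj (g q))) p) :=
    Dz_pmul dU dU
  have e5 : Dz (fun q => pone + pmul (g q) (pconj (g q))) p
      = pmul (Dz g p) (pconj (g p)) + pmul (g p) (pconj (Dzbar g p)) := by
    have h' : Dz (fun q => pone + pmul (g q) (pconj (g q))) p
        = Dz (fun q => pmul (g q) (pconj (g q))) p := Dz_const_add _ _
    rw [h', Dz_pmul difg dcg, Dz_pconj difg]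
  have e6 : Dz (fun q => pmul pj (pconj (ω q))) p = pmul pj (pconj (Dzbar ω p)) := by
    calc Dz (fun q => pmul pj (pconj (ω q))) p
        = pmul (Dz (fun _ => pj) p) (pconj (ω p)) + pmul pj (Dz (fun q => pconj (ω q)) p) :=
          Dz_pmul (differentiableAt_const _) dcω
      _ = pmul pj (pconj (Dzbar ω p)) := by
          rw [Dz_const, Dz_pconj difω]
          simp [pmul, Prod.ext_iff]
  have t1 : Dzbar (fun q => pmul (-pj) (pmul (Dz g q) (ω q))) p
      = pmul (Dzbar (fun _ => -pj) p) (pmul (Dz g p) (ω p))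
        + pmul (-pj) (Dzbar (fun q => pmul (Dz g q) (ω q)) p) :=
    Dzbar_pmul (differentiableAt_const _) (diffAt_pmul dDzg difω)
  have t2 : Dzbar (fun q => pmul (Dz g q) (ω q)) p
      = pmul (Dzbar (fun q => Dz g q) p) (ω p) + pmul (Dz g p) (Dzbar ω p) :=
    Dzbar_pmul dDzg difω
  rw [t1, t2, Dzbar_const, e2, e3, e4, e5, e6, h1 p hp, h2 p hp]
  simp only [pmul, pconj, pj, pone, pnormSq, Prod.ext_iff, Prod.mk_add_mk, Prod.smul_mk,
    Prod.neg_mk, smul_eq_mul, Prod.fst_add, Prod.snd_add, Prod.fst_zero, Prod.snd_zero]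
  constructor <;> ring
end
end
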